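/- arXiv:1403.7040 — 6 statements merged into one kernel-verified Lean document; each statement's English description precedes it below -/
import Mathlib

section
/- Let V be an r×t integer matrix with rows L_1,…,L_r, t ≥ 2, and let ψ : ℚ^d → ℚ^t be a surjective linear map onto the kernel of V. Then for every index i ∈ [t], the form ψ_i belongs to the span of {ψ_j : j ∈ X} for a subset X ⊆ [t]\{i} if and only if the affine subspace e_i + span{e_j : j ∈ X} of ℚ^t intersects the row space ⟨L_1ᵀ,…,L_rᵀ⟩ of V, where (e_i) is the canonical basis of ℚ^t. -/
open Matrix

private lemma dot_ker_of_mem_rowSpan {r t : ℕ} (A : Matrix (Fin r) (Fin t) ℚ)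
    {y : Fin t → ℚ} (hy : y ∈ Submodule.span ℚ (Set.range fun k => fun j => A k j))
    {w : Fin t → ℚ} (hw : A *ᵥ w = 0) : y ⬝ᵥ w = 0 := by
  induction hy using Submodule.span_induction with
  | mem z hz =>
    obtain ⟨k, rfl⟩ := hz
    have := congrFun hw k
    simpa [Matrix.mulVec, dotProduct] using this
  | zero => simp
  | add a b _ _ ha hb => simp [add_dotProduct, ha, hb]
  | smul c a _ ha => simp [smul_dotProduct, ha]

private lemma mem_rowSpan_of_dot_ker {r t : ℕ} (A : Matrix (Fin r) (Fin t) ℚ)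
    {y : Fin t → ℚ} (h : ∀ w, A *ᵥ w = 0 → y ⬝ᵥ w = 0) :
    y ∈ Submodule.span ℚ (Set.range fun k => fun j => A k j) := by
  by_contra hy
  set S := Submodule.span ℚ (Set.range fun k => fun j => A k j) with hS
  have hq : S.mkQ y ≠ 0 := by
    simpa [Submodule.mkQ_apply, Submodule.Quotient.mk_eq_zero] using hy
  obtain ⟨φ, hφ⟩ : ∃ φ : Module.Dual ℚ ((Fin t → ℚ) ⧸ S), φ (S.mkQ y) ≠ 0 := by
    by_contra hc
    push_neg at hc
    exact hq ((Module.forall_dual_apply_eq_zero_iff ℚ _).mp hc)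
  set g : (Fin t → ℚ) →ₗ[ℚ] ℚ := φ.comp S.mkQ with hg
  have hgS : ∀ z ∈ S, g z = 0 := by
    intro z hz
    simp only [hg, LinearMap.comp_apply, Submodule.mkQ_apply]
    rw [(Submodule.Quotient.mk_eq_zero S).mpr hz, map_zero]
  set w : Fin t → ℚ := fun j => g fun m => if j = m then 1 else 0 with hw
  have hgd : ∀ z : Fin t → ℚ, g z = z ⬝ᵥ w := by
    intro z
    rw [LinearMap.pi_apply_eq_sum_univ g z]
    simp [dotProduct, hw, smul_eq_mul]
  have hker : A *ᵥ w = 0 := by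
    funext k
    have : (fun j => A k j) ∈ S := Submodule.subset_span ⟨k, rfl⟩
    have h0 := hgS _ this
    rw [hgd] at h0
    simpa [Matrix.mulVec, dotProduct] using h0
  have := h w hker
  rw [← hgd] at this
  exact hφ this


private lemma dot_split {t : ℕ} (i : Fin t) (X : Finset (Fin t)) (hX : i ∉ X)
    (y w : Fin t → ℚ) (h0 : ∀ j, j ≠ i → j ∉ X → y j = 0) :
    y ⬝ᵥ w = y i * w i + ∑ j ∈ X, y j * w j := by
  unfold dotProduct
  rw [← Finset.sum_subset (Finset.subset_univ (insert i X))]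
  · rw [Finset.sum_insert hX]
  · intro j _ hj
    simp only [Finset.mem_insert, not_or] at hj
    rw [h0 j hj.1 hj.2, zero_mul]

/-- **Matrix complexity criterion.** For a matrix `V ∈ M_{r×t}(ℤ)` with `t ≥ 2` and a
surjective system of linear forms `ψ : ℚ^d → ℚ^t` onto `Ker V`, the form `ψ_i` lies in the
span of `{ψ_j : j ∈ X}` iff the affine subspace `e_i + span{e_j : j ∈ X}` meets the row
space of `V`. -/
theorem matrix_complexity_criterion (r t d : ℕ) (ht : 2 ≤ t)
    (V : Matrix (Fin r) (Fin t) ℤ)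
    (ψ : (Fin d → ℚ) →ₗ[ℚ] (Fin t → ℚ))
    (hψ : LinearMap.range ψ =
      LinearMap.ker (Matrix.mulVecLin (V.map (fun z => (z : ℚ)))))
    (i : Fin t) (X : Finset (Fin t)) (hX : i ∉ X) :
    ((fun x => ψ x i) ∈
        Submodule.span ℚ ((fun j => (fun x => ψ x j)) '' (X : Set (Fin t))))
      ↔ ∃ y ∈ Submodule.span ℚ (Set.range fun k => (fun j => (V k j : ℚ))),
          y i = 1 ∧ ∀ j, j ≠ i → j ∉ X → y j = 0 := by
  set A : Matrix (Fin r) (Fin t) ℚ := V.map (fun z => (z : ℚ)) with hA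
  have hrows : (Set.range fun k => (fun j => (V k j : ℚ)))
      = (Set.range fun k => fun j => A k j) := rfl
  have hker : ∀ x : Fin d → ℚ, A *ᵥ (ψ x) = 0 := by
    intro x
    have : ψ x ∈ LinearMap.range ψ := ⟨x, rfl⟩
    rw [hψ] at this
    simpa [Matrix.mulVecLin] using this
  have hsurj : ∀ w : Fin t → ℚ, A *ᵥ w = 0 → ∃ x, ψ x = w := by
    intro w hw
    have : w ∈ LinearMap.range ψ := by
      rw [hψ]; simpa [Matrix.mulVecLin] using hw
    exact this
  constructor
  · intro hmem
    rw [Finsupp.mem_span_image_iff_linearCombination] at hmem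
    obtain ⟨l, hl, hsum⟩ := hmem
    set y : Fin t → ℚ :=
      fun m => if m = i then 1 else if m ∈ X then -(l m) else 0 with hy
    have hyi : y i = 1 := by simp [hy]
    have hyout : ∀ j, j ≠ i → j ∉ X → y j = 0 := by
      intro j hji hjX; simp [hy, hji, hjX]
    refine ⟨y, ?_, hyi, hyout⟩
    rw [hrows]
    apply mem_rowSpan_of_dot_ker
    intro w hw
    obtain ⟨x, rfl⟩ := hsurj w hw
    have hx : ψ x i = ∑ j ∈ X, l j * ψ x j := by
      have := congrFun hsum x
      rw [Finsupp.linearCombination_apply] at this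
      rw [← this]
      rw [Finsupp.sum_fintype]
      · rw [Finset.sum_apply]
        rw [Finset.sum_subset (Finset.subset_univ X)]
        · refine Finset.sum_congr rfl fun j hj => ?_
          simp [smul_eq_mul]
        · intro j _ hj
          have : l j = 0 := Finsupp.notMem_support_iff.mp fun hc => hj (hl hc)
          simp [this]
      · intro j; simp
    rw [dot_split i X hX y (ψ x) hyout, hyi, one_mul]
    have hterm : ∑ j ∈ X, y j * ψ x j = ∑ j ∈ X, -(l j * ψ x j) := by
      refine Finset.sum_congr rfl fun j hj => ?_
      have : j ≠ i := fun h => hX (h ▸ hj)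
      simp [hy, this, hj, neg_mul]
    rw [hterm, Finset.sum_neg_distrib, hx]
    ring
  · rintro ⟨y, hyspan, hyi, hyout⟩
    rw [hrows] at hyspan
    have key : ∀ x : Fin d → ℚ, ψ x i = ∑ j ∈ X, (-(y j)) * ψ x j := by
      intro x
      have h0 : y ⬝ᵥ ψ x = 0 := dot_ker_of_mem_rowSpan A hyspan (hker x)
      rw [dot_split i X hX y (ψ x) hyout, hyi, one_mul] at h0
      have : ψ x i = -∑ j ∈ X, y j * ψ x j := by linarith
      rw [this, ← Finset.sum_neg_distrib]
      exact Finset.sum_congr rfl fun j _ => by ring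
    have : (fun x => ψ x i) = ∑ j ∈ X, (fun x => (-(y j)) * ψ x j) := by
      funext x
      rw [key x, Finset.sum_apply]
    rw [this]
    apply Submodule.sum_mem
    intro j hj
    have hmem : (fun x => ψ x j) ∈
        ((fun j => (fun x => ψ x j)) '' (X : Set (Fin t))) := ⟨j, hj, rfl⟩
    have : (fun x => (-(y j)) * ψ x j) = (-(y j)) • (fun x => ψ x j) := by
      funext x; simp [smul_eq_mul]
    rw [this]
    exact Submodule.smul_mem _ _ (Submodule.subset_span hmem)
end

section
/- Let V ∈ M_{r×t}(ℤ) be a matrix of complexity one with no zero columns, and ψ : ℤ^d → ℤ^t ∩ Ker_ℚ(V) a surjective system of linear forms in 1-normal form (at every i ∈ [t] it is in exact s_i-normal form with s_i ≤ 1). Then ψ is in exact 1-normal form at every i ∈ [t]; equivalently, ψ has complexity exactly one at every position (ψ_i lies in the span of the other forms for each i). -/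
/-- A system of linear forms over `ℤ`, given by the rows of `P`, is in exact `s`-normal
form at `i` if there is a set `J` of `s+1` variables on all of which `ψ_i` depends while
no other form depends on all of them. -/
def ExactNormalForm {t d : ℕ} (P : Matrix (Fin t) (Fin d) ℤ) (s : ℕ) (i : Fin t) : Prop :=
  ∃ J : Finset (Fin d), J.card = s + 1 ∧ (∀ k ∈ J, P i k ≠ 0) ∧
    ∀ j : Fin t, j ≠ i → ∃ k ∈ J, P j k = 0

/-- The `i`-th form of the system `P`, viewed as a vector of rational coefficients. -/
def formQ {t d : ℕ} (P : Matrix (Fin t) (Fin d) ℤ) (i : Fin t) : Fin d → ℚ :=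
  fun k => (P i k : ℚ)

/-- The system `P` has complexity at most one at every `i`: the other forms can be split
into at most two nonempty classes, with `ψ_i` outside the span of each class. -/
def ComplexityAtMostOneSystem {t d : ℕ} (P : Matrix (Fin t) (Fin d) ℤ) : Prop :=
  ∀ i : Fin t,
    (∃ X : Finset (Fin t), X = Finset.univ.erase i ∧ X.Nonempty ∧
      formQ P i ∉ Submodule.span ℚ (formQ P '' (X : Set (Fin t)))) ∨
    (∃ X₁ X₂ : Finset (Fin t), X₁.Nonempty ∧ X₂.Nonempty ∧ Disjoint X₁ X₂ ∧
      X₁ ∪ X₂ = Finset.univ.erase i ∧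
      formQ P i ∉ Submodule.span ℚ (formQ P '' (X₁ : Set (Fin t))) ∧
      formQ P i ∉ Submodule.span ℚ (formQ P '' (X₂ : Set (Fin t))))

/-- **Exact 1-normal form.** If `V` has complexity one and no zero columns, `t ≥ 3`, and
`ψ` (the system of rows of `P`) surjects onto `ℤ^t ∩ Ker_ℚ(V)` and is in `1`-normal form,
then `ψ` is in exact `1`-normal form at every `i ∈ [t]`. -/
theorem exact_one_normal_form (r t d : ℕ) (ht : 3 ≤ t)
    (V : Matrix (Fin r) (Fin t) ℤ) (P : Matrix (Fin t) (Fin d) ℤ)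
    (hcols : ∀ j : Fin t, ∃ k : Fin r, V k j ≠ 0)
    (hcplx : ComplexityAtMostOneSystem P)
    (hsurj : Set.range (fun x : Fin d → ℤ => fun i : Fin t => ∑ k, P i k * x k)
      = {y : Fin t → ℤ | V.mulVec y = 0})
    (hnormal : ∀ i : Fin t, ∃ s ≤ 1, ExactNormalForm P s i) :
    ∀ i : Fin t, ExactNormalForm P 1 i := by
  intro i
  obtain ⟨s, hs, hnf⟩ := hnormal i
  interval_cases s
  · -- rule out exact 0-normal form
    exfalso
    obtain ⟨J, hJcard, hJi, hJj⟩ := hnf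
    obtain ⟨k, rfl⟩ := Finset.card_eq_one.mp hJcard
    have hik : P i k ≠ 0 := hJi k (Finset.mem_singleton_self k)
    have hjk : ∀ j : Fin t, j ≠ i → P j k = 0 := by
      intro j hj
      obtain ⟨k', hk', h⟩ := hJj j hj
      rwa [Finset.mem_singleton.mp hk'] at h
    set x : Fin d → ℤ := fun m => if m = k then 1 else 0 with hx
    have hy : V.mulVec (fun i' : Fin t => ∑ m, P i' m * x m) = 0 := by
      have : (fun i' : Fin t => ∑ m, P i' m * x m)
          ∈ {y : Fin t → ℤ | V.mulVec y = 0} := by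
        rw [← hsurj]; exact ⟨x, rfl⟩
      exact this
    have hy' : ∀ i' : Fin t, (∑ m, P i' m * x m) = P i' k := by
      intro i'
      simp [hx, mul_ite]
    obtain ⟨r0, hr0⟩ := hcols i
    have h0 := congrFun hy r0
    rw [Matrix.mulVec, dotProduct] at h0
    have hsum : ∑ j : Fin t, V r0 j * (∑ m, P j m * x m) = V r0 i * P i k := by
      rw [Finset.sum_eq_single i]
      · rw [hy' i]
      · intro j _ hj
        rw [hy' j, hjk j hj, mul_zero]
      · intro h; exact absurd (Finset.mem_univ i) h
    rw [hsum] at h0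
    exact mul_ne_zero hr0 hik h0
  · exact hnf
end

section
/- Let ω ≥ 2, W = ∏_{p ≤ ω} p, and b an integer coprime to W. Let ψ_1,…,ψ_t : ℤ^d → ℤ be affine-linear forms with pairwise linearly independent nonzero linear parts, each of whose coefficient vectors has ℓ¹ norm at most D, and suppose ω > 2D². Then for every prime p and every nonempty B ⊆ [t]×[2] with slices B_i = B ∩ ({i}×[2]), the local density α(p,B) = ℙ_{n ∈ ℤ_p^d}( p | Wψ_i(n)+b for all i with B_i ≠ ∅ ) satisfies: α(p,B) = 0 if p ≤ ω; α(p,B) = 1/p if p > ω and B is contained in some {i}×[2]; and α(p,B) ≤ 1/p² if p > ω and B meets at least two rows. -/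
open Finset

private lemma fiber_shift {M N : Type*} [AddCommGroup M] [AddCommGroup N] [Fintype M]
    [DecidableEq N] (f : M →+ N) (hf : Function.Surjective f) (c c' : N) :
    (univ.filter fun m => f m = c).card = (univ.filter fun m => f m = c').card := by
  obtain ⟨m₀, hm₀⟩ := hf (c' - c)
  apply Finset.card_bij (fun m _ => m + m₀)
  · intro m hm
    simp only [mem_filter, mem_univ, true_and] at hm ⊢
    rw [map_add, hm, hm₀]; abel
  · intro a _ b _ h; exact add_right_cancel h
  · intro m hm
    simp only [mem_filter, mem_univ, true_and] at hm
    refine ⟨m - m₀, ?_, by abel⟩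
    simp only [mem_filter, mem_univ, true_and, map_sub, hm, hm₀]; abel

private lemma fiber_card_mul {M N : Type*} [AddCommGroup M] [AddCommGroup N] [Fintype M]
    [Fintype N] [DecidableEq N] (f : M →+ N) (hf : Function.Surjective f) (c : N) :
    (univ.filter fun m => f m = c).card * Fintype.card N = Fintype.card M := by
  have h := Finset.card_eq_sum_card_fiberwise
    (s := (univ : Finset M)) (t := (univ : Finset N)) (f := f) (fun x _ => mem_univ _)
  rw [Finset.card_univ] at h
  rw [h, Finset.sum_congr rfl (fun c' _ => (fiber_shift f hf c' c))]
  simp [Finset.sum_const, Finset.card_univ, mul_comm]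

private def lform {R : Type*} [CommRing R] {d : ℕ} (v : Fin d → R) : (Fin d → R) →+ R where
  toFun n := ∑ k, v k * n k
  map_zero' := by simp
  map_add' x y := by simp [mul_add, Finset.sum_add_distrib]

@[simp] private lemma lform_apply {R : Type*} [CommRing R] {d : ℕ} (v n : Fin d → R) :
    lform v n = ∑ k, v k * n k := rfl

private lemma sum_two {R : Type*} [CommRing R] {d : ℕ} (v : Fin d → R) {k l : Fin d}
    (hkl : k ≠ l) (x y : R) :
    ∑ m, v m * (if m = k then x else if m = l then y else 0) = v k * x + v l * y := by
  have h : ∀ m, v m * (if m = k then x else if m = l then y else 0)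
      = (if m = k then v k * x else 0) + (if m = l then v l * y else 0) := by
    intro m
    by_cases h1 : m = k
    · subst h1; simp [hkl]
    · by_cases h2 : m = l <;> simp [h1, h2, Ne.symm hkl]
  simp only [h]
  rw [Finset.sum_add_distrib, Finset.sum_ite_eq', Finset.sum_ite_eq']
  simp

/-- **Local densities for W-tricked forms.** Let `W = ∏_{p ≤ ω} p`, `(b, W) = 1`, and let
`ψ_1, …, ψ_t` be affine forms over `ℤ` with pairwise independent nonzero linear parts of
ℓ¹ norm at most `D`, with `ω > 2D²`. For every prime `p` and nonempty `B ⊆ [t]×[2]`, the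
local density `α(p,B) = ℙ_{n ∈ ℤ_p^d}(p ∣ Wψ_i(n)+b ∀ i with B_i ≠ ∅)` vanishes for
`p ≤ ω`, equals `1/p` if `p > ω` and `B` is vertical, and is `≤ 1/p²` if `p > ω` and `B`
meets at least two rows. -/
theorem gpy_local_densities (d t ω D : ℕ) (hω : 2 ≤ ω)
    (a : Fin t → Fin d → ℤ) (bc : Fin t → ℤ) (b : ℤ) (W : ℕ)
    (hW : W = ∏ q ∈ Finset.filter Nat.Prime (Finset.range (ω + 1)), q)
    (hb : IsCoprime b (W : ℤ))
    (hind : ∀ i j : Fin t, i ≠ j →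
      LinearIndependent ℚ ![fun k => (a i k : ℚ), fun k => (a j k : ℚ)])
    (hnz : ∀ i, a i ≠ 0)
    (hnorm : ∀ i, ∑ k, |a i k| ≤ (D : ℤ))
    (hωD : 2 * D ^ 2 < ω)
    (p : ℕ) [Fact p.Prime]
    (B : Finset (Fin t × Fin 2)) (hB : B.Nonempty) :
    (p ≤ ω →
      ((Finset.univ.filter fun n : Fin d → ZMod p =>
        ∀ i : Fin t, (∃ j, (i, j) ∈ B) →
          (W : ZMod p) * ((∑ k, (a i k : ZMod p) * n k) + (bc i : ZMod p))
            + (b : ZMod p) = 0).card : ℚ) / (p : ℚ) ^ d = 0) ∧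
    (ω < p → (∃ i : Fin t, ∀ q ∈ B, q.1 = i) →
      ((Finset.univ.filter fun n : Fin d → ZMod p =>
        ∀ i : Fin t, (∃ j, (i, j) ∈ B) →
          (W : ZMod p) * ((∑ k, (a i k : ZMod p) * n k) + (bc i : ZMod p))
            + (b : ZMod p) = 0).card : ℚ) / (p : ℚ) ^ d = 1 / p) ∧
    (ω < p → (∃ q ∈ B, ∃ q' ∈ B, q.1 ≠ q'.1) →
      ((Finset.univ.filter fun n : Fin d → ZMod p =>
        ∀ i : Fin t, (∃ j, (i, j) ∈ B) →
          (W : ZMod p) * ((∑ k, (a i k : ZMod p) * n k) + (bc i : ZMod p))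
            + (b : ZMod p) = 0).card : ℚ) / (p : ℚ) ^ d ≤ 1 / (p : ℚ) ^ 2) := by
  classical
  have hp : p.Prime := Fact.out
  have hp2 : 2 ≤ p := hp.two_le
  have habs : ∀ i k, |a i k| ≤ (D : ℤ) := fun i k =>
    le_trans (Finset.single_le_sum (f := fun k => |a i k|) (fun _ _ => abs_nonneg _)
      (mem_univ k)) (hnorm i)
  have hD1 : 1 ≤ D := by
    by_contra h
    obtain ⟨⟨i0, j0⟩, _⟩ := hB
    apply hnz i0
    funext k
    have h1 := habs i0 k
    have hD0 : D = 0 := by omega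
    rw [hD0] at h1
    simpa using abs_nonpos_iff.mp (by exact_mod_cast h1)
  have hpQ : (0 : ℚ) < (p : ℚ) := by exact_mod_cast hp.pos
  have hpdQ : (0 : ℚ) < (p : ℚ) ^ d := by positivity
  have hcardfun : Fintype.card (Fin d → ZMod p) = p ^ d := by
    simp [Fintype.card_fun, ZMod.card]
  -- common facts for p > ω
  have hWne : ω < p → ((W : ℕ) : ZMod p) ≠ 0 := by
    intro hpgt h
    have hpW : p ∣ W := (ZMod.natCast_eq_zero_iff W p).mp h
    rw [hW] at hpW
    obtain ⟨q, hq, hpq⟩ := hp.prime.exists_mem_finset_dvd hpW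
    simp only [Finset.mem_filter, Finset.mem_range] at hq
    have : p = q := (Nat.prime_dvd_prime_iff_eq hp hq.2).mp hpq
    omega
  have hDp : ω < p → (D : ℤ) < (p : ℤ) := by
    intro hpgt
    have h1 : D ≤ 2 * D ^ 2 := by nlinarith
    exact_mod_cast (by omega : D < p)
  have hcoef : ω < p → ∀ i k, a i k ≠ 0 → ((a i k : ℤ) : ZMod p) ≠ 0 := by
    intro hpgt i k h hc
    exact h (Int.eq_zero_of_abs_lt_dvd ((ZMod.intCast_zmod_eq_zero_iff_dvd _ p).mp hc)
      (lt_of_le_of_lt (habs i k) (hDp hpgt)))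
  set c : Fin t → ZMod p := fun i =>
    (-(b : ZMod p) - (W : ZMod p) * (bc i : ZMod p)) / (W : ZMod p) with hc
  have heq : ω < p → ∀ (i : Fin t) (x : ZMod p),
      ((W : ZMod p) * (x + (bc i : ZMod p)) + (b : ZMod p) = 0 ↔ x = c i) := by
    intro hpgt i x
    rw [hc, eq_div_iff (hWne hpgt)]
    constructor <;> intro h <;> linear_combination h
  refine ⟨?_, ?_, ?_⟩
  · -- p ≤ ω : density 0
    intro hpω
    have hpW : p ∣ W := by
      rw [hW]
      exact Finset.dvd_prod_of_mem _ (by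
        simp only [Finset.mem_filter, Finset.mem_range]
        exact ⟨Nat.lt_succ_of_le hpω, hp⟩)
    have hW0 : ((W : ℕ) : ZMod p) = 0 := (ZMod.natCast_eq_zero_iff W p).mpr hpW
    have hempty : (Finset.univ.filter fun n : Fin d → ZMod p =>
        ∀ i : Fin t, (∃ j, (i, j) ∈ B) →
          (W : ZMod p) * ((∑ k, (a i k : ZMod p) * n k) + (bc i : ZMod p))
            + (b : ZMod p) = 0) = ∅ := by
      rw [Finset.filter_eq_empty_iff]
      intro n _ hn
      obtain ⟨⟨i0, j0⟩, hij⟩ := hB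
      have h1 := hn i0 ⟨j0, hij⟩
      rw [hW0, zero_mul, zero_add] at h1
      have hdvd : (p : ℤ) ∣ b := (ZMod.intCast_zmod_eq_zero_iff_dvd b p).mp h1
      have hcop : IsCoprime b ((p : ℕ) : ℤ) :=
        hb.of_isCoprime_of_dvd_right (Int.natCast_dvd_natCast.mpr hpW)
      have hu : IsUnit ((p : ℕ) : ℤ) := hcop.isUnit_of_dvd' hdvd dvd_rfl
      have := Int.isUnit_iff.mp hu
      have h2 : (2 : ℤ) ≤ (p : ℤ) := by exact_mod_cast hp2
      omega
    rw [hempty]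
    simp
  · -- vertical case
    intro hpgt hvert
    obtain ⟨i₀, hi₀⟩ := hvert
    have hi₀B : ∃ j, (i₀, j) ∈ B := by
      obtain ⟨⟨qi, qj⟩, hq⟩ := hB
      have : qi = i₀ := hi₀ _ hq
      subst this
      exact ⟨qj, hq⟩
    have hfe : (Finset.univ.filter fun n : Fin d → ZMod p =>
        ∀ i : Fin t, (∃ j, (i, j) ∈ B) →
          (W : ZMod p) * ((∑ k, (a i k : ZMod p) * n k) + (bc i : ZMod p))
            + (b : ZMod p) = 0)
        = Finset.univ.filter fun n => lform (fun k => ((a i₀ k : ℤ) : ZMod p)) n = c i₀ := by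
      apply Finset.filter_congr
      intro n _
      simp only [lform_apply]
      constructor
      · intro h
        exact (heq hpgt i₀ _).mp (h i₀ hi₀B)
      · rintro h i ⟨j, hij⟩
        have : i = i₀ := hi₀ (i, j) hij
        subst this
        exact (heq hpgt i _).mpr h
    obtain ⟨k₀, hk₀⟩ : ∃ k, a i₀ k ≠ 0 := by
      by_contra h
      push_neg at h
      exact hnz i₀ (funext h)
    have hck₀ : ((a i₀ k₀ : ℤ) : ZMod p) ≠ 0 := hcoef hpgt i₀ k₀ hk₀
    have hsurj : Function.Surjective (lform (fun k => ((a i₀ k : ℤ) : ZMod p))) := by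
      intro y
      refine ⟨fun k => if k = k₀ then ((a i₀ k₀ : ℤ) : ZMod p)⁻¹ * y else 0, ?_⟩
      simp only [lform_apply, mul_ite, mul_zero]
      rw [Finset.sum_ite_eq' univ k₀]
      simp only [mem_univ, if_true]
      rw [← mul_assoc, mul_inv_cancel₀ hck₀, one_mul]
    have hcount := fiber_card_mul _ hsurj (c i₀)
    rw [hcardfun, ZMod.card] at hcount
    rw [hfe]
    rw [div_eq_div_iff hpdQ.ne' hpQ.ne']
    have h5 : ((Finset.univ.filter fun n =>
        lform (fun k => ((a i₀ k : ℤ) : ZMod p)) n = c i₀).card : ℚ) * p = (p : ℚ) ^ d := by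
      exact_mod_cast congrArg (Nat.cast : ℕ → ℚ) hcount
    rw [h5, one_mul]
  · -- two-row case
    intro hpgt hq
    obtain ⟨⟨i, ji⟩, hiB, ⟨j, jj⟩, hjB, hij⟩ := hq
    simp only at hij
    obtain ⟨k, l, hm⟩ : ∃ k l, a i k * a j l - a i l * a j k ≠ 0 := by
      by_contra h
      push_neg at h
      obtain ⟨k₀, hk₀⟩ : ∃ k, a i k ≠ 0 := by
        by_contra h'
        push_neg at h'
        exact hnz i (funext h')
      have hli := (LinearIndependent.pair_iff.mp (hind i j hij))
        ((a j k₀ : ℚ)) (-(a i k₀ : ℚ))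
      have hzero : (a j k₀ : ℚ) • (fun k => (a i k : ℚ))
          + (-(a i k₀ : ℚ)) • (fun k => (a j k : ℚ)) = 0 := by
        funext m
        have hkm := h k₀ m
        have hq : (a i k₀ : ℚ) * (a j m : ℚ) - (a i m : ℚ) * (a j k₀ : ℚ) = 0 := by
          exact_mod_cast congrArg (Int.cast : ℤ → ℚ) hkm
        simp only [Pi.add_apply, Pi.smul_apply, smul_eq_mul, Pi.zero_apply, neg_mul]
        linarith
      have := (hli hzero).2
      exact hk₀ (by exact_mod_cast neg_eq_zero.mp this)
    have hkl : k ≠ l := by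
      rintro rfl
      simp at hm
    have hmlt : |a i k * a j l - a i l * a j k| < (p : ℤ) := by
      have h1 : |a i k * a j l| ≤ (D : ℤ) * D := by
        rw [abs_mul]
        exact mul_le_mul (habs i k) (habs j l) (abs_nonneg _) (by positivity)
      have h2 : |a i l * a j k| ≤ (D : ℤ) * D := by
        rw [abs_mul]
        exact mul_le_mul (habs i l) (habs j k) (abs_nonneg _) (by positivity)
      have h3 := abs_sub (a i k * a j l) (a i l * a j k)
      have h4 : (2 * D ^ 2 : ℤ) < (p : ℤ) := by exact_mod_cast (by omega : 2 * D ^ 2 < p)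
      nlinarith
    set Δ : ZMod p := ((a i k : ℤ) : ZMod p) * ((a j l : ℤ) : ZMod p)
      - ((a i l : ℤ) : ZMod p) * ((a j k : ℤ) : ZMod p) with hΔdef
    have hΔ : Δ ≠ 0 := by
      intro h
      apply hm
      apply Int.eq_zero_of_abs_lt_dvd _ hmlt
      rw [← ZMod.intCast_zmod_eq_zero_iff_dvd]
      push_cast
      rw [← h, hΔdef]
    set g : (Fin d → ZMod p) →+ (ZMod p × ZMod p) :=
      (lform (fun m => ((a i m : ℤ) : ZMod p))).prod (lform (fun m => ((a j m : ℤ) : ZMod p)))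
      with hg
    have hsurj : Function.Surjective g := by
      rintro ⟨c₁, c₂⟩
      refine ⟨fun m => if m = k then (c₁ * ((a j l : ℤ) : ZMod p)
          - c₂ * ((a i l : ℤ) : ZMod p)) * Δ⁻¹
        else if m = l then (((a i k : ℤ) : ZMod p) * c₂
          - ((a j k : ℤ) : ZMod p) * c₁) * Δ⁻¹ else 0, ?_⟩
      rw [hg]
      rw [AddMonoidHom.prod_apply, Prod.mk.injEq]
      simp only [lform_apply]
      rw [sum_two _ hkl, sum_two _ hkl]
      constructor
      · field_simp
        ring
      · field_simp
        ring
    have hsub : (Finset.univ.filter fun n : Fin d → ZMod p =>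
        ∀ i : Fin t, (∃ j, (i, j) ∈ B) →
          (W : ZMod p) * ((∑ k, (a i k : ZMod p) * n k) + (bc i : ZMod p))
            + (b : ZMod p) = 0)
        ⊆ Finset.univ.filter fun n => g n = (c i, c j) := by
      intro n hn
      rw [Finset.mem_filter] at hn ⊢
      refine ⟨mem_univ _, ?_⟩
      rw [hg, AddMonoidHom.prod_apply, Prod.mk.injEq]
      constructor
      · exact (heq hpgt i _).mp (hn.2 i ⟨ji, hiB⟩)
      · exact (heq hpgt j _).mp (hn.2 j ⟨jj, hjB⟩)
    have hcount := fiber_card_mul g hsurj (c i, c j)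
    rw [hcardfun] at hcount
    have hcardN : Fintype.card (ZMod p × ZMod p) = p ^ 2 := by
      simp [ZMod.card]; ring
    rw [hcardN] at hcount
    have hle := Finset.card_le_card hsub
    rw [div_le_div_iff₀ hpdQ (by positivity)]
    calc ((Finset.univ.filter fun n : Fin d → ZMod p =>
        ∀ i : Fin t, (∃ j, (i, j) ∈ B) →
          (W : ZMod p) * ((∑ k, (a i k : ZMod p) * n k) + (bc i : ZMod p))
            + (b : ZMod p) = 0).card : ℚ) * (p : ℚ) ^ 2
        ≤ ((Finset.univ.filter fun n => g n = (c i, c j)).card : ℚ) * (p : ℚ) ^ 2 := by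
          have h6 : ((Finset.univ.filter fun n : Fin d → ZMod p =>
            ∀ i : Fin t, (∃ j, (i, j) ∈ B) →
              (W : ZMod p) * ((∑ k, (a i k : ZMod p) * n k) + (bc i : ZMod p))
                + (b : ZMod p) = 0).card : ℚ)
              ≤ ((Finset.univ.filter fun n => g n = (c i, c j)).card : ℚ) := by
            exact_mod_cast hle
          nlinarith
      _ = (p : ℚ) ^ d := by exact_mod_cast congrArg (Nat.cast : ℕ → ℚ) hcount
      _ = 1 * (p : ℚ) ^ d := by ring
end

section
/- Let M be a prime, ν : ℤ_M → ℝ₊ a D-pseudorandom weight of level H (meaning: for every affine system θ : ℤ_M^d → ℤ_M^t of finite complexity with d, t, and the coefficient norm of its linear part all at most D, the average 𝔼_{n ∈ ℤ_M^d} ∏_i ν(θ_i(n)) equals 1 + O_D(1/H)). Let B ⊆ ℤ_M be symmetric (B = −B) and μ_B = (M/|B|)·1_B. Then ν' = ½(ν + ν ∗ μ_B) is also D-pseudorandom of level H, where (ν ∗ μ_B)(x) = 𝔼_{y ∈ ℤ_M} ν(x−y) μ_B(y). -/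
/-- `ν : ℤ_M → ℝ` is `D`-pseudorandom of level `H` with constant `K`: every average of
`ν` along an affine system of finite complexity (no two linear parts parallel) with
dimensions and coefficient norm at most `D` equals `1 + O(K/H)`. -/
def IsPseudorandom (M : ℕ) [NeZero M] (ν : ZMod M → ℝ) (D : ℕ) (K H : ℝ) : Prop :=
  ∀ (d t : ℕ) (a : Fin t → Fin d → ZMod M) (b : Fin t → ZMod M),
    d ≤ D → t ≤ D →
    (∑ i, ∑ j, min (a i j).val (M - (a i j).val)) ≤ D →
    (∀ i j : Fin t, i ≠ j → LinearIndependent (ZMod M) ![a i, a j]) →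
    |(∑ n : Fin d → ZMod M, ∏ i, ν ((∑ k, a i k * n k) + b i)) / (M : ℝ) ^ d - 1| ≤ K / H

/-- **Pseudorandomness of averaged weights.** If `ν` is `D`-pseudorandom of level `H`
and `B ⊆ ℤ_M` is symmetric, then `ν' = ½(ν + ν ∗ μ_B)` is also `D`-pseudorandom of
level `H`. -/
theorem pseudorandom_of_average (M : ℕ) [Fact M.Prime]
    (ν : ZMod M → ℝ) (hν : ∀ x, 0 ≤ ν x)
    (D : ℕ) (K H : ℝ) (hH : 0 < H)
    (hpr : IsPseudorandom M ν D K H)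
    (B : Finset (ZMod M)) (hB : B.Nonempty) (hsym : ∀ y ∈ B, -y ∈ B) :
    IsPseudorandom M (fun x => (ν x + (∑ y ∈ B, ν (x - y)) / B.card) / 2) D K H := by
  intro d t a b hd ht hnorm hindep
  have hBc : (0:ℝ) < B.card := by
    exact_mod_cast Finset.card_pos.mpr hB
  set S : Finset (ZMod M × Bool) := B ×ˢ (Finset.univ : Finset Bool) with hS
  set s : ZMod M × Bool → ZMod M := fun p => if p.2 then p.1 else 0 with hs
  -- pointwise rewrite of the averaged weight
  have key : ∀ x : ZMod M, (ν x + (∑ y ∈ B, ν (x - y)) / B.card) / 2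
      = (∑ p ∈ S, ν (x - s p)) / (2 * B.card) := by
    intro x
    rw [hS, Finset.sum_product]
    have : ∀ y : ZMod M, (∑ e : Bool, ν (x - s (y, e))) = ν (x - y) + ν x := by
      intro y
      simp [hs, Fintype.sum_bool]
    rw [Finset.sum_congr rfl fun y _ => this y]
    rw [Finset.sum_add_distrib, Finset.sum_const, nsmul_eq_mul]
    field_simp
    ring
  -- expand the product
  have h1 : ∀ n : Fin d → ZMod M,
      (∏ i, ((ν ((∑ k, a i k * n k) + b i) +
          (∑ y ∈ B, ν (((∑ k, a i k * n k) + b i) - y)) / B.card) / 2))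
      = (∑ g ∈ Fintype.piFinset (fun _ : Fin t => S),
          ∏ i, ν ((∑ k, a i k * n k) + (b i - s (g i)))) / (2 * B.card) ^ t := by
    intro n
    have := fun i : Fin t => key ((∑ k, a i k * n k) + b i)
    calc (∏ i, ((ν ((∑ k, a i k * n k) + b i) +
          (∑ y ∈ B, ν (((∑ k, a i k * n k) + b i) - y)) / B.card) / 2))
        = ∏ i, (∑ p ∈ S, ν (((∑ k, a i k * n k) + b i) - s p)) / (2 * B.card) := by
          exact Finset.prod_congr rfl fun i _ => this i
      _ = (∏ i, ∑ p ∈ S, ν (((∑ k, a i k * n k) + b i) - s p)) / (2 * B.card) ^ t := by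
          rw [Finset.prod_div_distrib, Finset.prod_const, Finset.card_univ, Fintype.card_fin]
      _ = (∑ g ∈ Fintype.piFinset (fun _ : Fin t => S),
          ∏ i, ν ((∑ k, a i k * n k) + (b i - s (g i)))) / (2 * B.card) ^ t := by
          rw [Finset.prod_univ_sum]
          congr 1
          refine Finset.sum_congr rfl fun g _ => Finset.prod_congr rfl fun i _ => ?_
          rw [add_sub_assoc]
  -- each shifted system satisfies the bound
  have hF : ∀ g : Fin t → ZMod M × Bool,
      |(∑ n : Fin d → ZMod M, ∏ i, ν ((∑ k, a i k * n k) + (b i - s (g i)))) / (M : ℝ) ^ d - 1|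
        ≤ K / H := fun g => hpr d t a (fun i => b i - s (g i)) hd ht hnorm hindep
  have hKH : 0 ≤ K / H := le_trans (abs_nonneg _) (hF fun _ => ((hB.choose, false)))
  -- cardinality of the index set
  have hcard : ((Fintype.piFinset (fun _ : Fin t => S)).card : ℝ) = (2 * B.card) ^ t := by
    rw [Fintype.card_piFinset]
    push_cast
    rw [Finset.prod_const, Finset.card_univ, Fintype.card_fin]
    congr 1
    rw [hS, Finset.card_product]
    simp [mul_comm]
  have hCpos : (0:ℝ) < (2 * B.card) ^ t := by positivity
  -- rewrite the main average
  have h2 : (∑ n : Fin d → ZMod M, ∏ i, ((ν ((∑ k, a i k * n k) + b i) +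
        (∑ y ∈ B, ν (((∑ k, a i k * n k) + b i) - y)) / B.card) / 2)) / (M : ℝ) ^ d
      = (∑ g ∈ Fintype.piFinset (fun _ : Fin t => S),
          (∑ n : Fin d → ZMod M, ∏ i, ν ((∑ k, a i k * n k) + (b i - s (g i)))) / (M : ℝ) ^ d)
        / (2 * B.card) ^ t := by
    rw [Finset.sum_congr rfl fun n _ => h1 n, ← Finset.sum_div, Finset.sum_comm,
      div_right_comm]
    congr 1
    exact Finset.sum_div _ _ _
  simp only []
  rw [h2]
  have expand : (∑ g ∈ Fintype.piFinset (fun _ : Fin t => S),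
          (∑ n : Fin d → ZMod M, ∏ i, ν ((∑ k, a i k * n k) + (b i - s (g i)))) / (M : ℝ) ^ d)
        / (2 * B.card) ^ t - 1
      = (∑ g ∈ Fintype.piFinset (fun _ : Fin t => S),
          ((∑ n : Fin d → ZMod M, ∏ i, ν ((∑ k, a i k * n k) + (b i - s (g i)))) / (M : ℝ) ^ d - 1))
        / (2 * B.card) ^ t := by
    rw [Finset.sum_sub_distrib, Finset.sum_const, nsmul_eq_mul, hcard, sub_div]
    congr 1
    rw [mul_one, div_self (ne_of_gt hCpos)]
  rw [expand, abs_div, abs_of_pos hCpos, div_le_iff₀ hCpos]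
  calc |∑ g ∈ Fintype.piFinset (fun _ : Fin t => S),
          ((∑ n : Fin d → ZMod M, ∏ i, ν ((∑ k, a i k * n k) + (b i - s (g i)))) / (M : ℝ) ^ d - 1)|
      ≤ ∑ g ∈ Fintype.piFinset (fun _ : Fin t => S),
          |(∑ n : Fin d → ZMod M, ∏ i, ν ((∑ k, a i k * n k) + (b i - s (g i)))) / (M : ℝ) ^ d - 1| :=
        Finset.abs_sum_le_sum_abs _ _
    _ ≤ ∑ _g ∈ Fintype.piFinset (fun _ : Fin t => S), K / H :=
        Finset.sum_le_sum fun g _ => hF g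
    _ = K / H * (2 * B.card) ^ t := by
        rw [Finset.sum_const, nsmul_eq_mul, hcard, mul_comm]
end

section
/- (Box Van der Corput inequality) Let X_1, X_2 be finite nonempty sets, h : X_1 × X_2 → ℝ, and b_1 : X_1 → [−1,1], b_2 : X_2 → [−1,1]. Then |𝔼_{x_1 ∈ X_1, x_2 ∈ X_2} h(x_1,x_2) b_1(x_1) b_2(x_2)| ≤ ‖h‖_{□(X_1×X_2)}, where ‖h‖_{□(X_1×X_2)}⁴ = 𝔼_{x_1,x_1' ∈ X_1} 𝔼_{x_2,x_2' ∈ X_2} h(x_1,x_2)h(x_1,x_2')h(x_1',x_2)h(x_1',x_2'). -/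
/-- **Box Van der Corput inequality.** For `h : X₁ × X₂ → ℝ` and `b₁, b₂` bounded by 1,
`|𝔼 h(x₁,x₂) b₁(x₁) b₂(x₂)| ≤ ‖h‖_{□(X₁×X₂)}`. -/
theorem box_van_der_corput {α β : Type*} (X₁ : Finset α) (X₂ : Finset β)
    (hX₁ : X₁.Nonempty) (hX₂ : X₂.Nonempty)
    (h : α → β → ℝ) (b₁ : α → ℝ) (b₂ : β → ℝ)
    (hb₁ : ∀ x ∈ X₁, b₁ x ∈ Set.Icc (-1 : ℝ) 1)
    (hb₂ : ∀ y ∈ X₂, b₂ y ∈ Set.Icc (-1 : ℝ) 1) :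
    |(∑ x ∈ X₁, ∑ y ∈ X₂, h x y * b₁ x * b₂ y) / ((X₁.card : ℝ) * (X₂.card : ℝ))|
      ≤ ((∑ x ∈ X₁, ∑ x' ∈ X₁, ∑ y ∈ X₂, ∑ y' ∈ X₂,
            h x y * h x y' * h x' y * h x' y')
          / ((X₁.card : ℝ) ^ 2 * (X₂.card : ℝ) ^ 2)) ^ ((1 : ℝ) / 4) := by
  set m : ℝ := (X₁.card : ℝ) with hm
  set n : ℝ := (X₂.card : ℝ) with hn
  have hm0 : 0 < m := by
    rw [hm]; exact_mod_cast Finset.card_pos.mpr hX₁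
  have hn0 : 0 < n := by
    rw [hn]; exact_mod_cast Finset.card_pos.mpr hX₂
  set S : ℝ := ∑ x ∈ X₁, ∑ y ∈ X₂, h x y * b₁ x * b₂ y with hS
  set B : ℝ := ∑ x ∈ X₁, ∑ x' ∈ X₁, ∑ y ∈ X₂, ∑ y' ∈ X₂,
      h x y * h x y' * h x' y * h x' y' with hBdef
  set T : α → ℝ := fun x => ∑ y ∈ X₂, h x y * b₂ y with hT
  -- B as sum of squares
  have hB : B = ∑ q ∈ X₂ ×ˢ X₂, (∑ x ∈ X₁, h x q.1 * h x q.2) ^ 2 := by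
    have e1 : ∀ q : β × β, (∑ x ∈ X₁, h x q.1 * h x q.2) ^ 2
        = ∑ p ∈ X₁ ×ˢ X₁, (h p.1 q.1 * h p.1 q.2) * (h p.2 q.1 * h p.2 q.2) := by
      intro q
      rw [sq, Finset.sum_mul_sum, ← Finset.sum_product']
    simp_rw [e1, hBdef]
    rw [← Finset.sum_product']
    simp_rw [← Finset.sum_product']
    refine Finset.sum_equiv (Equiv.prodComm _ _) (fun p => ?_) (fun p hp => by simp; ring)
    simp [Finset.mem_product]
    tauto
  have hBnonneg : 0 ≤ B := by
    rw [hB]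
    exact Finset.sum_nonneg fun q _ => sq_nonneg _
  -- S = ∑ b₁ x * T x
  have hS' : S = ∑ x ∈ X₁, b₁ x * T x := by
    rw [hS]
    refine Finset.sum_congr rfl fun x _ => ?_
    rw [hT, Finset.mul_sum]
    exact Finset.sum_congr rfl fun y _ => by ring
  set U : ℝ := ∑ x ∈ X₁, (T x) ^ 2 with hU
  have hUnonneg : 0 ≤ U := Finset.sum_nonneg fun x _ => sq_nonneg _
  -- first Cauchy–Schwarz
  have hCS1 : S ^ 2 ≤ m * U := by
    rw [hS']
    calc (∑ x ∈ X₁, b₁ x * T x) ^ 2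
        ≤ (∑ x ∈ X₁, (b₁ x) ^ 2) * ∑ x ∈ X₁, (T x) ^ 2 :=
          Finset.sum_mul_sq_le_sq_mul_sq _ _ _
      _ ≤ m * U := by
          refine mul_le_mul_of_nonneg_right ?_ hUnonneg
          calc (∑ x ∈ X₁, (b₁ x) ^ 2) ≤ ∑ x ∈ X₁, (1 : ℝ) := by
                refine Finset.sum_le_sum fun x hx => ?_
                have := hb₁ x hx
                nlinarith [this.1, this.2]
            _ = m := by simp [hm]
  -- U as bilinear form
  have hU' : U = ∑ q ∈ X₂ ×ˢ X₂, (b₂ q.1 * b₂ q.2) * ∑ x ∈ X₁, h x q.1 * h x q.2 := by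
    have e2 : ∀ x, (T x) ^ 2
        = ∑ q ∈ X₂ ×ˢ X₂, (h x q.1 * b₂ q.1) * (h x q.2 * b₂ q.2) := by
      intro x
      rw [sq, hT, Finset.sum_mul_sum, ← Finset.sum_product']
    rw [hU]
    simp_rw [e2]
    rw [Finset.sum_comm]
    refine Finset.sum_congr rfl fun q _ => ?_
    rw [Finset.mul_sum]
    exact Finset.sum_congr rfl fun x _ => by ring
  -- second Cauchy–Schwarz
  have hCS2 : U ^ 2 ≤ n ^ 2 * B := by
    rw [hU']
    calc (∑ q ∈ X₂ ×ˢ X₂, (b₂ q.1 * b₂ q.2) * ∑ x ∈ X₁, h x q.1 * h x q.2) ^ 2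
        ≤ (∑ q ∈ X₂ ×ˢ X₂, (b₂ q.1 * b₂ q.2) ^ 2)
            * ∑ q ∈ X₂ ×ˢ X₂, (∑ x ∈ X₁, h x q.1 * h x q.2) ^ 2 :=
          Finset.sum_mul_sq_le_sq_mul_sq _ _ _
      _ ≤ n ^ 2 * B := by
          rw [← hB]
          refine mul_le_mul_of_nonneg_right ?_ hBnonneg
          calc (∑ q ∈ X₂ ×ˢ X₂, (b₂ q.1 * b₂ q.2) ^ 2) ≤ ∑ q ∈ X₂ ×ˢ X₂, (1 : ℝ) := by
                refine Finset.sum_le_sum fun q hq => ?_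
                rw [Finset.mem_product] at hq
                have h1 := hb₂ q.1 hq.1
                have h2 := hb₂ q.2 hq.2
                have ha : (b₂ q.1) ^ 2 ≤ 1 := by nlinarith [h1.1, h1.2]
                have hb' : (b₂ q.2) ^ 2 ≤ 1 := by nlinarith [h2.1, h2.2]
                rw [mul_pow]
                nlinarith [sq_nonneg (b₂ q.1), sq_nonneg (b₂ q.2)]
            _ = n ^ 2 := by simp [hn, sq]
  -- combine: S^4 ≤ m^2 n^2 B
  have hS4 : S ^ 4 ≤ m ^ 2 * n ^ 2 * B := by
    have h2 : (S ^ 2) ^ 2 ≤ (m * U) ^ 2 := pow_le_pow_left₀ (sq_nonneg S) hCS1 2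
    calc S ^ 4 = (S ^ 2) ^ 2 := by ring
      _ ≤ (m * U) ^ 2 := h2
      _ = m ^ 2 * U ^ 2 := by ring
      _ ≤ m ^ 2 * (n ^ 2 * B) := mul_le_mul_of_nonneg_left hCS2 (sq_nonneg m)
      _ = m ^ 2 * n ^ 2 * B := by ring
  -- final step
  have key : |S / (m * n)| ^ (4 : ℕ) ≤ B / (m ^ 2 * n ^ 2) := by
    rw [abs_div, div_pow]
    rw [div_le_div_iff₀ (by positivity) (by positivity)]
    calc |S| ^ 4 * (m ^ 2 * n ^ 2) = S ^ 4 * (m ^ 2 * n ^ 2) := by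
          rw [← abs_pow, abs_of_nonneg (by positivity : (0:ℝ) ≤ S ^ 4)]
      _ ≤ m ^ 2 * n ^ 2 * B * (m ^ 2 * n ^ 2) :=
          mul_le_mul_of_nonneg_right hS4 (by positivity)
      _ = B * |m * n| ^ 4 := by
          rw [abs_of_nonneg (by positivity : (0:ℝ) ≤ m * n)]; ring
  have habs : |S / (m * n)| = (|S / (m * n)| ^ (4 : ℕ)) ^ ((1 : ℝ) / 4) := by
    rw [← Real.rpow_natCast (|S / (m*n)|) 4, ← Real.rpow_mul (abs_nonneg _)]
    norm_num
  rw [habs]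
  exact Real.rpow_le_rpow (by positivity) key (by norm_num)
end

section
/- For every Bohr set B = B(Γ, δ) in ℤ_M there exists c ∈ [1/2, 1] such that the dilate B_{|c} = B(Γ, cδ) is regular, meaning that for every ρ with 0 < ρ ≤ 2^{−6}/d (d = |Γ|), one has (1 − 2⁶ρd)|B_{|c}| ≤ |B_{|c(1±ρ)}| ≤ (1 + 2⁶ρd)|B_{|c}|. -/
/-- `‖x/M‖`: distance from `x/M` to the nearest integer, for `x ∈ ℤ_M`. -/
noncomputable def toNearestInt (M : ℕ) [NeZero M] (x : ZMod M) : ℝ :=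
  min ((x.val : ℝ) / M) (1 - (x.val : ℝ) / M)

/-- The Bohr set `B(Γ, δ) = {x ∈ ℤ_M : ‖xr/M‖ ≤ δ ∀ r ∈ Γ}`. -/
noncomputable def bohrSet (M : ℕ) [NeZero M] (Γ : Finset (ZMod M)) (δ : ℝ) :
    Finset (ZMod M) :=
  Finset.univ.filter fun x => ∀ r ∈ Γ, toNearestInt M (x * r) ≤ δ

/-! Let `F c = log |B(Γ, cδ)|`, a nondecreasing function of `c`. If `c` is not regular,
witnessed by `ρ`, then `F` increases by at least `2⁵ρd` across `[c(1-ρ), c(1+ρ)]`, that is,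
with slope at least `16d`. If every `c ∈ [3/5, 9/10]` were irregular, these windows would
cover that interval, and a one-dimensional covering argument (each point is charged at most
twice) gives `F (92/100) - F (59/100) ≥ 2.4 d`. But `B(Γ, 0.92δ)` is covered by `4 ^ d`
translates of `B(Γ, 0.59δ)`, so this increase is at most `d log 4 < 2.4 d`. -/

open Finset

lemma UnitAddCircle.exists_coe_eq_abs_eq_norm (z : UnitAddCircle) :
    ∃ u : ℝ, (u : UnitAddCircle) = z ∧ |u| = ‖z‖ := by
  obtain ⟨t, rfl⟩ := QuotientAddGroup.mk_surjective z
  refine ⟨t - round t, ?_, ?_⟩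
  · simp
  · rw [UnitAddCircle.norm_eq]

section BohrSetOf

variable {G ι : Type*} [AddCommGroup G] [Fintype G]

noncomputable def bohrSetOf (χ : ι → G →+ UnitAddCircle) (Γ : Finset ι) (ε : ℝ) :
    Finset G :=
  {x | ∀ r ∈ Γ, ‖χ r x‖ ≤ ε}

variable {χ : ι → G →+ UnitAddCircle} {Γ : Finset ι} {ε ε₁ ε₂ : ℝ} {x : G}

lemma mem_bohrSetOf : x ∈ bohrSetOf χ Γ ε ↔ ∀ r ∈ Γ, ‖χ r x‖ ≤ ε := by
  simp [bohrSetOf]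

lemma bohrSetOf_mono : Monotone (bohrSetOf χ Γ) := fun _ _ hε _ hx ↦
  mem_bohrSetOf.2 fun r hr ↦ (mem_bohrSetOf.1 hx r hr).trans hε

lemma zero_mem_bohrSetOf (hε : 0 ≤ ε) : 0 ∈ bohrSetOf χ Γ ε :=
  mem_bohrSetOf.2 fun r _ ↦ by simpa using hε

/-- `B(Γ, ε₂)` is covered by `4 ^ |Γ|` translates of `B(Γ, ε₁)`: sort `x` by the
`ε₁`-cells containing the signed lifts of the `χ r x`, which lie in `[-ε₂, ε₂]`. -/
theorem card_bohrSetOf_le (hε₁ : 0 < ε₁) (hε : ε₂ < 2 * ε₁) :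
    #(bohrSetOf χ Γ ε₂) ≤ 4 ^ #Γ * #(bohrSetOf χ Γ ε₁) := by
  classical
  choose lift hlift_coe hlift_abs using UnitAddCircle.exists_coe_eq_abs_eq_norm
  set cell : G → Γ → ℤ := fun x r ↦ ⌊(lift (χ r x) + ε₂) / ε₁⌋
  have hcell :
      ∀ x ∈ bohrSetOf χ Γ ε₂, cell x ∈ Fintype.piFinset fun _ ↦ Icc (0 : ℤ) 3 := by
    intro x hx
    refine Fintype.mem_piFinset.2 fun r ↦ mem_Icc.2 ⟨?_, ?_⟩
    all_goals
      have := abs_le.1 ((hlift_abs _).trans_le (mem_bohrSetOf.1 hx r r.2))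
    · exact Int.floor_nonneg.2 (div_nonneg (by linarith) hε₁.le)
    · refine Int.lt_add_one_iff.1 (Int.floor_lt.2 ?_)
      rw [div_lt_iff₀ hε₁]
      push_cast
      linarith
  have hfiber : ∀ k ∈ Fintype.piFinset fun _ : Γ ↦ Icc (0 : ℤ) 3,
      #{x ∈ bohrSetOf χ Γ ε₂ | cell x = k} ≤ #(bohrSetOf χ Γ ε₁) := by
    intro k _
    obtain hempty | ⟨x₀, hx₀⟩ :=
      eq_empty_or_nonempty {x ∈ bohrSetOf χ Γ ε₂ | cell x = k}
    · simp [hempty]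
    refine card_le_card_of_injOn (· - x₀) (fun x hx ↦ ?_) (fun _ _ _ _ ↦ sub_left_inj.1)
    refine mem_bohrSetOf.2 fun r hr ↦ ?_
    have hfloor := congrFun ((mem_filter.1 hx).2.trans (mem_filter.1 hx₀).2.symm) ⟨r, hr⟩
    have hclose := Int.abs_sub_lt_one_of_floor_eq_floor hfloor
    rw [div_sub_div_same, add_sub_add_right_eq_sub, abs_div, abs_of_pos hε₁,
      div_lt_one hε₁] at hclose
    calc ‖χ r (x - x₀)‖
        = ‖((lift (χ r x) - lift (χ r x₀) : ℝ) : UnitAddCircle)‖ := by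
          rw [map_sub, AddCircle.coe_sub, hlift_coe, hlift_coe]
      _ ≤ |lift (χ r x) - lift (χ r x₀)| := QuotientAddGroup.norm_mk_le_norm
      _ ≤ ε₁ := hclose.le
  calc #(bohrSetOf χ Γ ε₂)
      ≤ #(bohrSetOf χ Γ ε₁) * #(Fintype.piFinset fun _ : Γ ↦ Icc (0 : ℤ) 3) :=
        card_le_mul_card_image_of_maps_to hcell _ hfiber
    _ = 4 ^ #Γ * #(bohrSetOf χ Γ ε₁) := by simp [mul_comm]

end BohrSetOf

lemma ZMod.norm_toAddCircle {M : ℕ} [NeZero M] (x : ZMod M) :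
    ‖ZMod.toAddCircle x‖ = toNearestInt M x := by
  have hM : (0 : ℝ) < M := Nat.cast_pos.2 (NeZero.pos M)
  rw [ZMod.toAddCircle_apply, UnitAddCircle.norm_eq, abs_sub_round_div_natCast_eq,
    Nat.mod_eq_of_lt x.val_lt, toNearestInt, Nat.cast_min, ← min_div_div_right hM.le,
    Nat.cast_sub x.val_lt.le, sub_div, div_self hM.ne']

lemma bohrSet_eq_bohrSetOf (M : ℕ) [NeZero M] (Γ : Finset (ZMod M)) (ε : ℝ) :
    bohrSet M Γ ε =
      bohrSetOf (fun r ↦ ZMod.toAddCircle.comp (AddMonoidHom.mulRight r)) Γ ε := by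
  ext x
  simp [bohrSet, mem_bohrSetOf, ZMod.norm_toAddCircle]

section Covering

variable {ι : Type*} {F : ℝ → ℝ} {K L R a b : ℝ}

/-- Greedy walk: from the current point `a`, jump to the right end of the covering interval
through `a` that reaches furthest. Here `p` is the left end of the previous interval, and
`hleft` says that intervals two steps apart are disjoint, so each point is charged at most
twice. -/
theorem Monotone.mul_sub_le_of_finite_cover (hF : Monotone F) (hK : 0 ≤ K) (hbR : b ≤ R)
    {l r : ι → ℝ} (s : Finset ι)
    (hsteep : ∀ i ∈ s, r i ≤ R ∧ K * (r i - l i) ≤ F (r i) - F (l i))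
    {p : ℝ} (hpa : p ≤ a) (hab : a ≤ b) (hleft : ∀ i ∈ s, a < r i → p ≤ l i)
    (hcover : Set.Icc a b ⊆ ⋃ i ∈ s, Set.Ioo (l i) (r i)) :
    K * (b - a) ≤ 2 * F R - F p - F a := by
  classical
  induction s using Finset.strongInduction generalizing a p with
  | H s ih =>
  obtain ⟨i, hi, hai, hmax⟩ : ∃ i ∈ s, a ∈ Set.Ioo (l i) (r i) ∧
      ∀ j ∈ s, a ∈ Set.Ioo (l j) (r j) → r j ≤ r i := by
    obtain ⟨j, hj, haj⟩ := Set.mem_iUnion₂.1 (hcover ⟨le_rfl, hab⟩)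
    obtain ⟨i, hi, hmax⟩ :=
      exists_max_image {j ∈ s | a ∈ Set.Ioo (l j) (r j)} r ⟨j, mem_filter.2 ⟨hj, haj⟩⟩
    rw [mem_filter] at hi
    exact ⟨i, hi.1, hi.2, fun j hj haj ↦ hmax j (mem_filter.2 ⟨hj, haj⟩)⟩
  obtain ⟨hrR, hjump⟩ := hsteep i hi
  have hstep : K * (r i - a) ≤ F (r i) - F p := by
    nlinarith [hF (hleft i hi hai.2), hai.1]
  rcases le_or_gt (r i) b with hrb | hbr
  · have hrest := ih (s.erase i) (erase_ssubset hi)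
      (fun j hj ↦ hsteep j (mem_of_mem_erase hj)) hai.2.le hrb
      (fun j hj hrj ↦ le_of_not_gt fun hlj ↦
        (hmax j (mem_of_mem_erase hj) ⟨hlj, hai.2.trans hrj⟩).not_gt hrj)
      (fun x hx ↦ by
        obtain ⟨j, hj, hxj⟩ := Set.mem_iUnion₂.1 (hcover ⟨hai.2.le.trans hx.1, hx.2⟩)
        refine Set.mem_iUnion₂.2 ⟨j, mem_erase.2 ⟨?_, hj⟩, hxj⟩
        rintro rfl
        exact hxj.2.not_ge hx.1)
    linarith
  · nlinarith [hF hrR, hF (hab.trans hbR)]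

theorem Monotone.mul_sub_le_of_locally_steep (hF : Monotone F) (hK : 0 ≤ K) (hLa : L ≤ a)
    (hab : a ≤ b) (hbR : b ≤ R)
    (hsteep : ∀ c ∈ Set.Icc a b, ∃ l r, c ∈ Set.Ioo l r ∧ L ≤ l ∧ r ≤ R ∧
      K * (r - l) ≤ F r - F l) :
    K * (b - a) ≤ 2 * (F R - F L) := by
  choose! l r hlr hLl hrR hjump using hsteep
  obtain ⟨t, hta, ht, hcover⟩ := isCompact_Icc.elim_finite_subcover_image
    (fun c _ ↦ isOpen_Ioo) fun c hc ↦ Set.mem_biUnion hc (hlr c hc)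
  have := hF.mul_sub_le_of_finite_cover hK hbR ht.toFinset
    (fun c hc ↦ ⟨hrR c (hta (ht.mem_toFinset.1 hc)), hjump c (hta (ht.mem_toFinset.1 hc))⟩)
    hLa hab (fun c hc _ ↦ hLl c (hta (ht.mem_toFinset.1 hc))) (by simpa using hcover)
  linarith [hF hLa]

end Covering

lemma Real.monotone_log_natCast : Monotone fun n : ℕ ↦ Real.log n := by
  intro m n hmn
  rcases m.eq_zero_or_pos with rfl | hm
  · simpa using Real.log_natCast_nonneg n
  · exact Real.log_le_log (Nat.cast_pos.2 hm) (Nat.cast_le.2 hmn)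

lemma Real.half_le_log_sub_log_of_one_add_mul_le {x A B : ℝ} (hx₀ : 0 ≤ x) (hx₂ : x ≤ 2)
    (hA : 0 < A) (hAB : (1 + x) * A ≤ B) : x / 2 ≤ Real.log B - Real.log A := by
  have hlog : x / 2 ≤ Real.log (1 + x) := by
    refine le_trans ?_ (Real.le_log_one_add_of_nonneg hx₀)
    rw [div_le_div_iff₀ two_pos (by linarith)]
    nlinarith
  have hmono := Real.log_le_log (by positivity) hAB
  rw [Real.log_mul (by positivity) hA.ne'] at hmono
  linarith

/-- For `N c = |B(Γ, cδ)|` and `d = |Γ|` this is regularity of `B(Γ, cδ)`. -/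
def IsRegularScale (N : ℝ → ℕ) (d c : ℝ) : Prop :=
  ∀ ρ : ℝ, 0 < ρ → ρ ≤ (2 : ℝ) ^ (-6 : ℤ) / d →
    ((1 - 2 ^ 6 * ρ * d) * (N c : ℝ) ≤ N (c * (1 - ρ)) ∧
      (N (c * (1 - ρ)) : ℝ) ≤ (1 + 2 ^ 6 * ρ * d) * N c) ∧
    ((1 - 2 ^ 6 * ρ * d) * (N c : ℝ) ≤ N (c * (1 + ρ)) ∧
      (N (c * (1 + ρ)) : ℝ) ≤ (1 + 2 ^ 6 * ρ * d) * N c)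

/-- Two of the four inequalities hold by monotonicity, the other two because
`(1 - x) (1 + x) ≤ 1`. -/
lemma isRegularScale_of_forall_lt {N : ℝ → ℕ} {d c : ℝ} (hN : Monotone N) (hc : 0 ≤ c)
    (hd : 0 < d)
    (h : ∀ ρ : ℝ, 0 < ρ → ρ ≤ (2 : ℝ) ^ (-6 : ℤ) / d →
      (N (c * (1 + ρ)) : ℝ) < (1 + 2 ^ 6 * ρ * d) * N (c * (1 - ρ))) :
    IsRegularScale N d c := by
  intro ρ hρ hρd
  have hgrowth := h ρ hρ hρd
  have hx₁ : 2 ^ 6 * ρ * d ≤ 1 := by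
    rw [le_div_iff₀ hd] at hρd
    norm_num at hρd ⊢
    linarith
  have hleft : (N (c * (1 - ρ)) : ℝ) ≤ N c := by
    exact_mod_cast hN (by nlinarith)
  have hright : (N c : ℝ) ≤ N (c * (1 + ρ)) := by
    exact_mod_cast hN (by nlinarith)
  have hx₀ : 0 ≤ 2 ^ 6 * ρ * d := by positivity
  refine ⟨⟨?_, ?_⟩, ?_, ?_⟩ <;> nlinarith

lemma exists_steep_window_of_not_isRegularScale {N : ℝ → ℕ} {d c : ℝ} (hN : Monotone N)
    (hpos : ∀ t, 0 < t → 0 < N t) (hd : 1 ≤ d) (hc₀ : 0 < c) (hc₁ : c ≤ 1)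
    (hirregular : ¬IsRegularScale N d c) :
    ∃ ρ : ℝ, 0 < ρ ∧ ρ ≤ 1 / 64 ∧ 16 * d * (c * (1 + ρ) - c * (1 - ρ)) ≤
      Real.log (N (c * (1 + ρ))) - Real.log (N (c * (1 - ρ))) := by
  obtain ⟨ρ, hρ, hρd, hjump⟩ : ∃ ρ : ℝ, 0 < ρ ∧ ρ ≤ (2 : ℝ) ^ (-6 : ℤ) / d ∧
      (1 + 2 ^ 6 * ρ * d) * (N (c * (1 - ρ)) : ℝ) ≤ N (c * (1 + ρ)) := by
    by_contra! h
    exact hirregular (isRegularScale_of_forall_lt hN hc₀.le (by linarith) h)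
  have hx₁ : 2 ^ 6 * ρ * d ≤ 1 := by
    rw [le_div_iff₀ (by linarith)] at hρd
    norm_num at hρd ⊢
    linarith
  have hρd₀ : 0 ≤ ρ * d := by nlinarith
  refine ⟨ρ, hρ, by nlinarith, ?_⟩
  calc 16 * d * (c * (1 + ρ) - c * (1 - ρ)) ≤ 2 ^ 6 * ρ * d / 2 := by nlinarith
    _ ≤ Real.log (N (c * (1 + ρ))) - Real.log (N (c * (1 - ρ))) :=
      Real.half_le_log_sub_log_of_one_add_mul_le (by positivity) (by linarith)
        (Nat.cast_pos.2 (hpos _ (by nlinarith))) hjump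

theorem exists_isRegularScale {N : ℝ → ℕ} {d : ℕ} (hN : Monotone N)
    (hpos : ∀ t, 0 < t → 0 < N t)
    (hdoubling : ∀ s t, 0 < s → t < 2 * s → N t ≤ 4 ^ d * N s) :
    ∃ c ∈ Set.Icc (1 / 2 : ℝ) 1, IsRegularScale N d c := by
  rcases d.eq_zero_or_pos with rfl | hd
  · refine ⟨1, by norm_num, fun ρ hρ hρ₀ ↦ ?_⟩
    norm_num at hρ₀
    linarith
  have hd₁ : (1 : ℝ) ≤ d := Nat.one_le_cast.2 hd
  by_contra! hirregular
  set F : ℝ → ℝ := fun t ↦ Real.log (N t)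
  have hsteep : ∀ c ∈ Set.Icc (3 / 5 : ℝ) (9 / 10), ∃ l r, c ∈ Set.Ioo l r ∧
      59 / 100 ≤ l ∧ r ≤ 92 / 100 ∧ 16 * d * (r - l) ≤ F r - F l := by
    rintro c ⟨hc₁, hc₂⟩
    obtain ⟨ρ, hρ, hρ₁, hslope⟩ := exists_steep_window_of_not_isRegularScale hN hpos hd₁
      (by linarith) (by linarith) (hirregular c ⟨by linarith, by linarith⟩)
    exact ⟨c * (1 - ρ), c * (1 + ρ), ⟨by nlinarith, by nlinarith⟩, by nlinarith,
      by nlinarith, hslope⟩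
  have hcover : 16 * d * (9 / 10 - 3 / 5) ≤ 2 * (F (92 / 100) - F (59 / 100)) :=
    (Real.monotone_log_natCast.comp hN).mul_sub_le_of_locally_steep (by positivity)
      (by norm_num) (by norm_num) (by norm_num) hsteep
  have hgrowth : F (92 / 100) - F (59 / 100) ≤ d * Real.log 4 := by
    have hN₀ : (0 : ℝ) < N (59 / 100) := Nat.cast_pos.2 (hpos _ (by norm_num))
    have := Real.monotone_log_natCast
      (hdoubling (59 / 100) (92 / 100) (by norm_num) (by norm_num))
    simp only [Nat.cast_mul, Nat.cast_pow] at this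
    rw [Real.log_mul (by positivity) hN₀.ne', Real.log_pow] at this
    norm_num at this ⊢
    linarith
  have hlog₄ : Real.log 4 ≤ 2 := by
    rw [show (4 : ℝ) = 2 ^ 2 by norm_num, Real.log_pow]
    push_cast
    linarith [Real.log_le_sub_one_of_pos (show (0 : ℝ) < 2 by norm_num)]
  nlinarith [mul_le_mul_of_nonneg_left hlog₄ (Nat.cast_nonneg (α := ℝ) d)]

/-- **Bourgain's regularization lemma.** Every Bohr set `B(Γ,δ)` has a dilate `B(Γ,cδ)`
with `c ∈ [1/2,1]` that is regular: for all `0 < ρ ≤ 2⁻⁶/d` (with `d = |Γ|`), both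
`|B(Γ, c(1-ρ)δ)|` and `|B(Γ, c(1+ρ)δ)|` lie between `(1 - 2⁶ρd)|B(Γ,cδ)|` and
`(1 + 2⁶ρd)|B(Γ,cδ)|`. -/
theorem bohr_regularization (M : ℕ) [NeZero M] (Γ : Finset (ZMod M)) (δ : ℝ)
    (hδ : 0 < δ) :
    ∃ c : ℝ, c ∈ Set.Icc (1 / 2 : ℝ) 1 ∧
      ∀ ρ : ℝ, 0 < ρ → ρ ≤ (2 : ℝ) ^ (-6 : ℤ) / (Γ.card : ℝ) →
        ((1 - 2 ^ 6 * ρ * Γ.card) * ((bohrSet M Γ (c * δ)).card : ℝ)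
            ≤ ((bohrSet M Γ (c * (1 - ρ) * δ)).card : ℝ) ∧
          ((bohrSet M Γ (c * (1 - ρ) * δ)).card : ℝ)
            ≤ (1 + 2 ^ 6 * ρ * Γ.card) * ((bohrSet M Γ (c * δ)).card : ℝ)) ∧
        ((1 - 2 ^ 6 * ρ * Γ.card) * ((bohrSet M Γ (c * δ)).card : ℝ)
            ≤ ((bohrSet M Γ (c * (1 + ρ) * δ)).card : ℝ) ∧
          ((bohrSet M Γ (c * (1 + ρ) * δ)).card : ℝ)
            ≤ (1 + 2 ^ 6 * ρ * Γ.card) * ((bohrSet M Γ (c * δ)).card : ℝ)) := by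
  simp only [bohrSet_eq_bohrSetOf]
  refine exists_isRegularScale (N := fun t ↦ #(bohrSetOf _ Γ (t * δ))) ?_ ?_ ?_
  · exact fun s t hst ↦ card_le_card (bohrSetOf_mono (mul_le_mul_of_nonneg_right hst hδ.le))
  · exact fun t ht ↦ card_pos.2 ⟨0, zero_mem_bohrSetOf (by positivity)⟩
  · intro s t hs hst
    exact card_bohrSetOf_le (by positivity) (by nlinarith)
end
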